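/- arXiv:2203.09469 — 2 statements merged into one kernel-verified Lean document; each statement's English description precedes it below -/
import Mathlib

section
/- Let A be a Lie algebroid over M with anchor ρ and let U : TM → A be a vector bundle isomorphism with vanishing A-torsion T^A_U = 0. Then N := ρ∘U : TM → TM is a Nijenhuis operator on M, and U is a Lie algebroid isomorphism from (TM)_N to A, i.e., U[X,Y]_N = [UX, UY]_A and ρ∘U = N. -/
/-- The `A`-torsion
`T^A_U(X,Y) = [UX,UY]_A + UρU[X,Y] − U[ρUX,Y] − U[X,ρUY]`. -/
def aTorsion {R : Type*} [CommRing R] [Algebra ℝ R]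
    {L : Type*} [LieRing L] [LieAlgebra ℝ L] [Module R L]
    (ρ : L →ₗ[R] Derivation ℝ R R) (U : Derivation ℝ R R →ₗ[R] L)
    (X Y : Derivation ℝ R R) : L :=
  ⁅U X, U Y⁆ + U (ρ (U ⁅X, Y⁆)) - U ⁅ρ (U X), Y⁆ - U ⁅X, ρ (U Y)⁆

/-- Let `A` be a Lie algebroid over `M` (sections `L`, anchor `ρ`, Leibniz
rule) and `U : TM → A` a vector bundle isomorphism with vanishing `A`-torsion.
Then `N := ρ∘U` is a Nijenhuis operator on `M` and `U` is a Lie algebroid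
isomorphism from `(TM)_N` to `A`: `U[X,Y]_N = [UX,UY]_A` (and `ρ∘U = N` by
definition). -/
theorem torsionFree_iso_gives_nijenhuis {R : Type*} [CommRing R] [Algebra ℝ R]
    {L : Type*} [LieRing L] [LieAlgebra ℝ L] [Module R L]
    (ρ : L →ₗ[R] Derivation ℝ R R)
    (hLeib : ∀ (a b : L) (f : R), ⁅a, f • b⁆ = f • ⁅a, b⁆ + (ρ a) f • b)
    (hanchor : ∀ a b : L, ρ ⁅a, b⁆ = ⁅ρ a, ρ b⁆)
    (U : Derivation ℝ R R →ₗ[R] L) (hU : Function.Bijective U)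
    (hT : ∀ X Y : Derivation ℝ R R, aTorsion ρ U X Y = 0) :
    letI N : Derivation ℝ R R →ₗ[R] Derivation ℝ R R := ρ ∘ₗ U
    (∀ X Y : Derivation ℝ R R,
      ⁅N X, N Y⁆ + N (N ⁅X, Y⁆) - N ⁅N X, Y⁆ - N ⁅X, N Y⁆ = 0) ∧
    (∀ X Y : Derivation ℝ R R,
      U (⁅N X, Y⁆ + ⁅X, N Y⁆ - N ⁅X, Y⁆) = ⁅U X, U Y⁆) := by
  have key : ∀ X Y : Derivation ℝ R R,
      U (⁅(ρ ∘ₗ U) X, Y⁆ + ⁅X, (ρ ∘ₗ U) Y⁆ - (ρ ∘ₗ U) ⁅X, Y⁆) = ⁅U X, U Y⁆ := by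
    intro X Y
    have h := hT X Y
    unfold aTorsion at h
    simp only [LinearMap.comp_apply, map_add, map_sub]
    linear_combination (norm := abel) -h
  refine ⟨fun X Y => ?_, key⟩
  have h2 := congrArg ρ (key X Y)
  rw [hanchor] at h2
  simp only [map_add, map_sub, LinearMap.comp_apply] at h2 ⊢
  linear_combination (norm := abel) -h2
end

section
/- Let (𝔞, ▷) be a finite-dimensional pre-Lie algebra, A = 𝔞_Lie ⋉ 𝔞 the action Lie algebroid over the manifold 𝔞 with anchor ρ(c_a) = X_{L(a)} on constant sections c_a (where L(a)x = a▷x and X_{L(a)} is the linear vector field with flow the linear action), bracket [c_a, c_b]_A = c_{[a,b]} on constant sections. Let U send the constant vector field a^↑ to the constant section c_a. Then the A-torsion of U vanishes: T^A_U(a^↑, b^↑) = c_{[a,b]} − c_{a▷b} + c_{b▷a} = 0. -/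
/- The pre-Lie algebra `𝔞` is viewed as a manifold, whose functions form the
commutative `ℝ`-algebra `R` and whose vector fields are `Derivation ℝ R R`.
`up a` is the constant vector field `a^↑` and `lin φ` the linear vector field
`X_φ`, with `[a^↑, b^↑] = 0` and `[X_φ, a^↑] = φ(a)^↑`. `ΓA` is the module of
sections of the action Lie algebroid `A = 𝔞_Lie ⋉ 𝔞`, with constant sections
`cst a = c_a`, bracket `[c_a,c_b]_A = c_{[a,b]}` and anchor `ρ(c_a) = X_{L(a)}`
where `L(a) = a▷-`. -/
theorem preLie_action_algebroid_aTorsion_vanishes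
    {𝔞 : Type*} [AddCommGroup 𝔞] [Module ℝ 𝔞] [FiniteDimensional ℝ 𝔞]
    (mul : 𝔞 →ₗ[ℝ] 𝔞 →ₗ[ℝ] 𝔞)
    (hpre : ∀ a b c : 𝔞,
      mul (mul a b) c - mul a (mul b c) = mul (mul b a) c - mul b (mul a c))
    {R : Type*} [CommRing R] [Algebra ℝ R]
    (up : 𝔞 →ₗ[ℝ] Derivation ℝ R R)
    (lin : (𝔞 →ₗ[ℝ] 𝔞) → Derivation ℝ R R)
    (hconst : ∀ a b : 𝔞, ⁅up a, up b⁆ = 0)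
    (hlin : ∀ (φ : 𝔞 →ₗ[ℝ] 𝔞) (a : 𝔞), ⁅lin φ, up a⁆ = up (φ a))
    {ΓA : Type*} [AddCommGroup ΓA] [Module ℝ ΓA] [Module R ΓA]
    (bracketA : ΓA → ΓA → ΓA)
    (cst : 𝔞 →ₗ[ℝ] ΓA)
    (ρ : ΓA →ₗ[R] Derivation ℝ R R)
    (hbrA : ∀ a b : 𝔞, bracketA (cst a) (cst b) = cst (mul a b - mul b a))
    (hρ : ∀ a : 𝔞, ρ (cst a) = lin (mul a))
    (U : Derivation ℝ R R →ₗ[R] ΓA)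
    (hU : ∀ a : 𝔞, U (up a) = cst a) :
    ∀ a b : 𝔞,
      bracketA (U (up a)) (U (up b)) + U (ρ (U ⁅up a, up b⁆))
          - U ⁅ρ (U (up a)), up b⁆ - U ⁅up a, ρ (U (up b))⁆
        = cst (mul a b - mul b a) - cst (mul a b) + cst (mul b a) ∧
      bracketA (U (up a)) (U (up b)) + U (ρ (U ⁅up a, up b⁆))
          - U ⁅ρ (U (up a)), up b⁆ - U ⁅up a, ρ (U (up b))⁆
        = 0 := by
  intro a b
  have key : bracketA (U (up a)) (U (up b)) + U (ρ (U ⁅up a, up b⁆))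
      - U ⁅ρ (U (up a)), up b⁆ - U ⁅up a, ρ (U (up b))⁆
      = cst (mul a b - mul b a) - cst (mul a b) + cst (mul b a) := by
    have h1 : ⁅up a, up b⁆ = 0 := hconst a b
    have h2 : ⁅ρ (U (up a)), up b⁆ = up (mul a b) := by
      rw [hU, hρ]; exact hlin (mul a) b
    have h3 : ⁅up a, ρ (U (up b))⁆ = -up (mul b a) := by
      rw [hU, hρ, ← lie_skew]; rw [hlin (mul b) a]
    rw [h1, h2, h3, hU, hU, hbrA, map_zero, map_zero, map_zero, map_neg, hU]
    simp [hU]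
  refine ⟨key, ?_⟩
  rw [key, map_sub]
  abel
end
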